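/- For a pomset r over the communication labels and a word W, W belongs to the prefix closure of L(r) if and only if there exists a prefix pomset r' of r such that W ∈ L(r'). -/

import Mathlib

namespace CPom

/-- Communication labels over participants `P` and messages `M`.
`AB!m` is encoded with `isOut = true`, `AB?m` with `isOut = false`;
channels are ordered pairs of *distinct* participants. -/
structure Label (P M : Type) where
  sndr : P
  rcvr : P
  isOut : Bool
  msg : M
  ne : sndr ≠ rcvr

namespace Label

/-- The subject of `AB!m` is `A` (the sender); the subject of `AB?m` is `B` (the receiver). -/
def subject {P M : Type} (l : Label P M) : P :=
  if l.isOut then l.sndr else l.rcvr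

/-- `Dual l l'` holds when `l = AB!m` and `l' = AB?m` (matching output/input labels). -/
def Dual {P M : Type} (l l' : Label P M) : Prop :=
  l.isOut = true ∧ l'.isOut = false ∧ l.sndr = l'.sndr ∧ l.rcvr = l'.rcvr ∧ l.msg = l'.msg

end Label

/-- A labelled partially ordered set (a representative of a pomset) on event
carrier `E` with labels in `L`: a finite set of events, a partial order on them,
and a labelling function. -/
structure Lposet (E L : Type) where
  events : Finset E
  le : E → E → Prop
  lab : E → L
  le_refl : ∀ e ∈ events, le e e
  le_trans : ∀ a ∈ events, ∀ b ∈ events, ∀ c ∈ events, le a b → le b c → le a c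
  le_antisymm : ∀ a ∈ events, ∀ b ∈ events, le a b → le b a → a = b

variable {P M E F : Type}

/-- `es` enumerates the events of `r` consistently with its order, and `W` is the
corresponding word of labels. -/
def IsLinWith {L : Type} (r : Lposet E L) (es : List E) (W : List L) : Prop :=
  es.Nodup ∧ (∀ e, e ∈ es ↔ e ∈ r.events) ∧
    (∀ i j : Fin es.length, r.le (es.get i) (es.get j) → (i : ℕ) ≤ (j : ℕ)) ∧
    W = es.map r.lab

/-- The language of a pomset: the set of all its linearizations. -/
def lang {L : Type} (r : Lposet E L) : Set (List L) := {W | ∃ es, IsLinWith r es W}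

/-- The language of a set of pomsets. -/
def langSet {L : Type} (R : Set (Lposet E L)) : Set (List L) := ⋃ r ∈ R, lang r

/-- Prefix closure of a language. -/
def prefCl {α : Type} (L : Set (List α)) : Set (List α) := {w | ∃ w' ∈ L, w <+: w'}

open Classical in
/-- Restriction of an lposet to the events satisfying `p`. -/
noncomputable def Lposet.restrict {L : Type} (r : Lposet E L) (p : E → Prop) : Lposet E L where
  events := r.events.filter p
  le := r.le
  lab := r.lab
  le_refl e he := r.le_refl e (Finset.mem_of_mem_filter e he)
  le_trans a ha b hb c hc :=
    r.le_trans a (Finset.mem_of_mem_filter a ha) b (Finset.mem_of_mem_filter b hb)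
      c (Finset.mem_of_mem_filter c hc)
  le_antisymm a ha b hb :=
    r.le_antisymm a (Finset.mem_of_mem_filter a ha) b (Finset.mem_of_mem_filter b hb)

/-- Projection of a pomset on participant `A`: restriction to the events whose
label has subject `A`. -/
noncomputable def projP (r : Lposet E (Label P M)) (A : P) : Lposet E (Label P M) :=
  r.restrict fun e => (r.lab e).subject = A

/-- Projection of a word on participant `A`: keep the letters with subject `A`. -/
def wproj [DecidableEq P] (W : List (Label P M)) (A : P) : List (Label P M) :=
  W.filter fun l => decide (l.subject = A)

/-- `e` is an immediate predecessor of `e'` in `r`. -/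
def ImmPred {L : Type} (r : Lposet E L) (e e' : E) : Prop :=
  e ∈ r.events ∧ e' ∈ r.events ∧ e ≠ e' ∧ r.le e e' ∧
    ∀ e'' ∈ r.events, r.le e e'' → r.le e'' e' → e'' = e ∨ e'' = e'

/-- `e` and `e'` are matching output and input events of `r`. -/
def Matches (r : Lposet E (Label P M)) (e e' : E) : Prop :=
  ImmPred r e e' ∧ Label.Dual (r.lab e) (r.lab e')

/-- Well-formedness of a pomset over communication labels. -/
def WellFormed (r : Lposet E (Label P M)) : Prop :=
  -- (1) an output has at most one matching input (immediate successor with dual label)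
  (∀ e ∈ r.events, (r.lab e).isOut = true →
    ∀ e₁ ∈ r.events, ∀ e₂ ∈ r.events, Matches r e e₁ → Matches r e e₂ → e₁ = e₂) ∧
  -- (2) an input has exactly one matching output (immediate predecessor with dual label)
  (∀ e' ∈ r.events, (r.lab e').isOut = false → ∃! e, e ∈ r.events ∧ Matches r e e') ∧
  -- (3) immediate order between different subjects only via matching pairs
  (∀ e ∈ r.events, ∀ e' ∈ r.events, ImmPred r e e' →
    (r.lab e).subject ≠ (r.lab e').subject → Matches r e e') ∧
  -- (4) equally-labelled ordered outputs cannot have oppositely ordered matching inputs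
  (∀ e ∈ r.events, ∀ e' ∈ r.events, e ≠ e' → r.lab e = r.lab e' → (r.lab e).isOut = true →
    ∀ eb ∈ r.events, ∀ eb' ∈ r.events, Matches r e eb → Matches r e' eb' →
      r.le e e' → ¬ r.le eb' eb)

/-- A pomset is complete when every output event has a matching input event. -/
def CompletePom (r : Lposet E (Label P M)) : Prop :=
  ∀ e ∈ r.events, (r.lab e).isOut = true → ∃ e' ∈ r.events, Matches r e e'

/-- `r ⊑ r'` (`r` is less permissive than `r'`), same carrier:
same events, same labels, and the order of `r` contains the one of `r'`. -/
def LeqPermSame {L : Type} (r r' : Lposet E L) : Prop :=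
  r.events = r'.events ∧ (∀ e ∈ r.events, r.lab e = r'.lab e) ∧
    ∀ a ∈ r.events, ∀ b ∈ r.events, r'.le a b → r.le a b

/-- `r ⊑ r'` up to renaming of events (pomsets are isomorphism classes of lposets):
a label-preserving bijection of the events along which the order of `r'`
is contained in the order of `r`. -/
def LeqPermIso {L : Type} (r : Lposet E L) (r' : Lposet F L) : Prop :=
  ∃ φ : E → F, Set.BijOn φ ↑r.events ↑r'.events ∧
    (∀ e ∈ r.events, r'.lab (φ e) = r.lab e) ∧
    ∀ a ∈ r.events, ∀ b ∈ r.events, r'.le (φ a) (φ b) → r.le a b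

/-- Isomorphism of lposets (representing the same pomset). -/
def IsoPom {L : Type} (r : Lposet E L) (r' : Lposet F L) : Prop :=
  ∃ φ : E → F, Set.BijOn φ ↑r.events ↑r'.events ∧
    (∀ e ∈ r.events, r'.lab (φ e) = r.lab e) ∧
    ∀ a ∈ r.events, ∀ b ∈ r.events, (r.le a b ↔ r'.le (φ a) (φ b))

/-- `r'` is a prefix of `r`: there is a label-preserving injection `φ` of the events
of `r'` into those of `r` with `φ(≤') = ≤ ∩ (E × φ(E'))`. -/
def IsPrefixPom {L : Type} (r' : Lposet F L) (r : Lposet E L) : Prop :=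
  ∃ φ : F → E, Set.InjOn φ ↑r'.events ∧ Set.MapsTo φ ↑r'.events ↑r.events ∧
    (∀ e ∈ r'.events, r.lab (φ e) = r'.lab e) ∧
    ∀ x y : E,
      ((∃ a ∈ r'.events, ∃ b ∈ r'.events, φ a = x ∧ φ b = y ∧ r'.le a b) ↔
        (x ∈ r.events ∧ y ∈ r.events ∧ r.le x y ∧ ∃ b ∈ r'.events, φ b = y))

/-- `W` is `P`-feasible for the language `L`. -/
def Feasible [DecidableEq P] (W : List (Label P M)) (L : Set (List (Label P M))) : Prop :=
  ∀ A : P, ∃ W' ∈ L, wproj W A = wproj W' A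

/-- A word is well-formed (and complete) when it is a linearization of a
well-formed (and complete) pomset. -/
def WFWord (W : List (Label P M)) : Prop :=
  ∃ (F : Type) (rw : Lposet F (Label P M)), WellFormed rw ∧ W ∈ lang rw

def WFCompleteWord (W : List (Label P M)) : Prop :=
  ∃ (F : Type) (rw : Lposet F (Label P M)), WellFormed rw ∧ CompletePom rw ∧ W ∈ lang rw

/-- The action `α` concurrently repeats in `r`. -/
def ConcRepeats {L : Type} (r : Lposet E L) (α : L) : Prop :=
  ∃ e ∈ r.events, ∃ e' ∈ r.events,
    e ≠ e' ∧ r.lab e = α ∧ r.lab e' = α ∧ ¬ r.le e e' ∧ ¬ r.le e' e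

section Closure

variable [Fintype P] [DecidableEq P] [DecidableEq E]

/-- Events of the inter-participant closure: disjoint union of the events of the
components, tagged by the participant. -/
def clEvents (t : P → Lposet E (Label P M)) : Finset (P × E) :=
  Finset.univ.biUnion fun A => (t A).events.image fun e => (A, e)

/-- Labelling of the inter-participant closure. -/
def clLab (t : P → Lposet E (Label P M)) : P × E → Label P M := fun p => (t p.1).lab p.2

/-- The union of the component orders. -/
def compRel (t : P → Lposet E (Label P M)) : P × E → P × E → Prop := fun p q =>
  p.1 = q.1 ∧ p.2 ∈ (t p.1).events ∧ q.2 ∈ (t p.1).events ∧ (t p.1).le p.2 q.2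

/-- `RI` is a legitimate choice of `≤_I`: it relates only pairs of an output event
`AB!m` of the component of `A` with an input event `AB?m` of the component of `B`. -/
def MatchRel (t : P → Lposet E (Label P M)) (RI : P × E → P × E → Prop) : Prop :=
  ∀ p q, RI p q → p ∈ clEvents t ∧ q ∈ clEvents t ∧
    Label.Dual (clLab t p) (clLab t q) ∧ (clLab t p).sndr = p.1 ∧ (clLab t q).rcvr = q.1

/-- The inter-participant closure `□(t)` of a tuple of (already projected) pomsets:
all well-formed pomsets on the disjoint union of the events whose order is generated by
the component orders together with some matching relation `≤_I`. -/
def InterClosure (t : P → Lposet E (Label P M)) : Set (Lposet (P × E) (Label P M)) :=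
  { r | r.events = clEvents t ∧ (∀ p ∈ clEvents t, r.lab p = clLab t p) ∧ WellFormed r ∧
      ∃ RI : P × E → P × E → Prop, MatchRel t RI ∧
        ∀ p ∈ clEvents t, ∀ q ∈ clEvents t,
          (r.le p q ↔ Relation.ReflTransGen (fun x y => RI x y ∨ compRel t x y) p q) }

/-- Closure condition CCP2. -/
def SatCCP2 (R : Set (Lposet E (Label P M))) : Prop :=
  ∀ t : P → Lposet E (Label P M), (∀ A, t A ∈ R) →
    ∀ r ∈ InterClosure (fun A => projP (t A) A), ∃ r' ∈ R, LeqPermIso r r'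

/-- Closure condition CCP3. -/
def SatCCP3 (R : Set (Lposet E (Label P M))) : Prop :=
  ∀ t : P → Lposet E (Label P M), (∀ A, ∃ r ∈ R, IsPrefixPom (t A) r) →
    ∀ rb ∈ InterClosure (fun A => projP (t A) A),
      ∃ r' ∈ R, ∃ rp : Lposet E (Label P M), IsPrefixPom rp r' ∧ LeqPermIso rb rp

end Closure

open Classical in
/-- Number of occurrences of the label `α` on events preceding (or equal to) `e`
in the enumeration `es`. -/
noncomputable def countUpTo {L : Type} (es : List E) (lab : E → L) (α : L) (e : E) : ℕ :=
  ((es.take ((es.findIdx fun x => decide (x = e)) + 1)).map lab).countP fun x => decide (x = α)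

/-- A communicating finite-state machine (the per-participant automaton). -/
structure CFSM (Q P M : Type) where
  init : Q
  acc : Q → Prop
  tr : Q → Label P M → Q → Prop

/-- A communicating system: an `A`-CFSM (finite-state, transitions with subject `A`)
for every participant `A`. -/
structure CSystem (P M : Type) where
  St : P → Type
  fin : ∀ A, Finite (St A)
  mach : ∀ A, CFSM (St A) P M
  subj_ok : ∀ A q l q', (mach A).tr q l q' → l.subject = A

/-- Configurations: a local state per machine and, per channel, a multiset buffer
of messages (represented by occurrence counts). -/
def Config (S : CSystem P M) : Type := (∀ A, S.St A) × (P → P → M → ℕ)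

def initConfig (S : CSystem P M) : Config S := ⟨fun A => (S.mach A).init, fun _ _ _ => 0⟩

/-- Asynchronous semantics: outputs add a message to the buffer of the channel,
inputs consume an available message. -/
def Step [DecidableEq P] [DecidableEq M] (S : CSystem P M) (c : Config S) (l : Label P M)
    (c' : Config S) : Prop :=
  (l.isOut = true ∧ (S.mach l.sndr).tr (c.1 l.sndr) l (c'.1 l.sndr) ∧
    (∀ C, C ≠ l.sndr → c'.1 C = c.1 C) ∧
    ∀ A B m, c'.2 A B m =
      if A = l.sndr ∧ B = l.rcvr ∧ m = l.msg then c.2 A B m + 1 else c.2 A B m) ∨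
  (l.isOut = false ∧ (S.mach l.rcvr).tr (c.1 l.rcvr) l (c'.1 l.rcvr) ∧
    (∀ C, C ≠ l.rcvr → c'.1 C = c.1 C) ∧ 0 < c.2 l.sndr l.rcvr l.msg ∧
    ∀ A B m, c'.2 A B m =
      if A = l.sndr ∧ B = l.rcvr ∧ m = l.msg then c.2 A B m - 1 else c.2 A B m)

/-- Labelled runs of a communicating system. -/
inductive Run [DecidableEq P] [DecidableEq M] (S : CSystem P M) :
    Config S → List (Label P M) → Config S → Prop
  | nil (c : Config S) : Run S c [] c
  | cons {c c' c'' : Config S} {l : Label P M} {w : List (Label P M)} :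
      Step S c l c' → Run S c' w c'' → Run S c (l :: w) c''

/-- Accepting configuration: all machines in accepting states, all buffers empty. -/
def Accepting (S : CSystem P M) (c : Config S) : Prop :=
  (∀ A, (S.mach A).acc (c.1 A)) ∧ ∀ A B m, c.2 A B m = 0

/-- The language of a communicating system. -/
def sysLang [DecidableEq P] [DecidableEq M] (S : CSystem P M) : Set (List (Label P M)) :=
  {w | ∃ c, Run S (initConfig S) w c ∧ Accepting S c}

/-- Deadlock freedom: from every reachable configuration an accepting one is reachable. -/
def DeadlockFree [DecidableEq P] [DecidableEq M] (S : CSystem P M) : Prop :=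
  ∀ w c, Run S (initConfig S) w c → ∃ w' c', Run S c w' c' ∧ Accepting S c'

/-- `A` is termination-unaware in `S`: some reachable accepting configuration has an
input transition departing from `A`'s local state. -/
def TermUnawareSys [DecidableEq P] [DecidableEq M] (S : CSystem P M) (A : P) : Prop :=
  ∃ w c, Run S (initConfig S) w c ∧ Accepting S c ∧
    ∃ l q', (S.mach A).tr (c.1 A) l q' ∧ l.isOut = false

def WeaklyRealisable [DecidableEq P] [DecidableEq M] (L : Set (List (Label P M))) : Prop :=
  ∃ S : CSystem P M, L = sysLang S

def SafelyRealisable [DecidableEq P] [DecidableEq M] (L : Set (List (Label P M))) : Prop :=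
  ∃ S : CSystem P M, L = sysLang S ∧ DeadlockFree S

/-- `L` is termination-sound for `P'`: safely realisable by a system in which
`P'` is termination-aware. -/
def TermSound [DecidableEq P] [DecidableEq M] (L : Set (List (Label P M))) (P' : Set P) : Prop :=
  ∃ S : CSystem P M, L = sysLang S ∧ DeadlockFree S ∧ ∀ A ∈ P', ¬ TermUnawareSys S A

/-- `A` is termination-unaware for the language `L`: some `W, W' ∈ L` with
`W↾A` a proper prefix of `W'↾A` whose next letter is an input. -/
def TermUnawareLang [DecidableEq P] {M : Type} (L : Set (List (Label P M))) (A : P) : Prop :=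
  ∃ W ∈ L, ∃ W' ∈ L, ∃ l rest, wproj W' A = wproj W A ++ l :: rest ∧ l.isOut = false

/-- The relation `φ(≤_{r↾A}) ∪ ≤_{r'↾A}` used in the pomset-level termination condition. -/
def combRel {L : Type} (pA pA' : Lposet E L) (φ : E → E) : E → E → Prop := fun x y =>
  (x ∈ pA'.events ∧ y ∈ pA'.events ∧ pA'.le x y) ∨
    ∃ a ∈ pA.events, ∃ b ∈ pA.events, φ a = x ∧ φ b = y ∧ pA.le a b

/-- `A` is termination-unaware for the set of pomsets `R`. -/
def TermUnawarePom (R : Set (Lposet E (Label P M))) (A : P) : Prop :=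
  ∃ r ∈ R, ∃ r' ∈ R, ∃ φ : E → E,
    Set.InjOn φ ↑(projP r A).events ∧
    Set.MapsTo φ ↑(projP r A).events ↑(projP r' A).events ∧
    (∀ e ∈ (projP r A).events, (projP r' A).lab (φ e) = (projP r A).lab e) ∧
    -- `φ(≤_{r↾A}) ∪ ≤_{r'↾A}` is a partial order on the events of `r'↾A`
    (∀ x ∈ (projP r' A).events, ∀ y ∈ (projP r' A).events, ∀ z ∈ (projP r' A).events,
      combRel (projP r A) (projP r' A) φ x y → combRel (projP r A) (projP r' A) φ y z →
        combRel (projP r A) (projP r' A) φ x z) ∧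
    (∀ x ∈ (projP r' A).events, ∀ y ∈ (projP r' A).events,
      combRel (projP r A) (projP r' A) φ x y → combRel (projP r A) (projP r' A) φ y x →
        x = y) ∧
    -- every minimal element of the combined order is the image of a minimal element
    (∀ x ∈ (projP r' A).events,
      (∀ y ∈ (projP r' A).events, combRel (projP r A) (projP r' A) φ y x → y = x) →
        ∃ a ∈ (projP r A).events,
          (∀ b ∈ (projP r A).events, (projP r A).le b a → b = a) ∧ φ a = x) ∧
    -- some minimal element outside the image of `φ` is an input
    ∃ x ∈ (projP r' A).events, x ∉ φ '' ↑(projP r A).events ∧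
      (∀ y ∈ (projP r' A).events, y ∉ φ '' ↑(projP r A).events →
        combRel (projP r A) (projP r' A) φ y x → y = x) ∧
      ((projP r' A).lab x).isOut = false

/-! A prefix of a linearization of `r` enumerates a downward-closed set of events in an
order-respecting way, so it linearizes the restriction of `r` to that set, and such a
restriction is a prefix pomset of `r` along the inclusion. Conversely, the defining property
of a prefix pomset makes the image of any of its linearizations a downward-closed,
order-respecting list of events of `r`; appending minimal remaining events one at a time
extends it to a linearization of `r`. -/

lemma forall_rel_get_imp_le_iff_pairwise {α : Type} (R : α → α → Prop) (l : List α) :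
    (∀ i j : Fin l.length, R (l.get i) (l.get j) → (i : ℕ) ≤ j) ↔
      l.Pairwise fun a b => ¬ R b a := by
  rw [List.pairwise_iff_getElem]
  constructor
  · intro h i j hi hj hij hR
    exact absurd (h ⟨j, hj⟩ ⟨i, hi⟩ hR) (Nat.not_le.2 hij)
  · intro h i j hR
    by_contra hji
    exact h j i j.2 i.2 (by omega) hR

section LinPrefix

variable {L : Type}

open Classical in
@[simp]
lemma Lposet.mem_restrict_events (r : Lposet E L) (q : E → Prop) (e : E) :
    e ∈ (r.restrict q).events ↔ e ∈ r.events ∧ q e := by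
  simp [Lposet.restrict]

lemma Lposet.exists_minimal (r : Lposet E L) {s : Finset E} (hs : s.Nonempty)
    (hsub : ∀ e ∈ s, e ∈ r.events) : ∃ e ∈ s, ∀ x ∈ s, r.le x e → x = e := by
  classical
  -- an element with fewest predecessors in `s` is minimal
  obtain ⟨e, he, hmin⟩ := s.exists_min_image (fun x => (s.filter (r.le · x)).card) hs
  refine ⟨e, he, fun x hx hxe => by_contra fun hne => (hmin x hx).not_gt ?_⟩
  refine Finset.card_lt_card ((Finset.ssubset_iff_of_subset fun z hz => ?_).2 ⟨e, ?_, ?_⟩)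
  · simp only [Finset.mem_filter] at hz ⊢
    exact ⟨hz.1, r.le_trans z (hsub z hz.1) x (hsub x hx) e (hsub e he) hz.2 hxe⟩
  · exact Finset.mem_filter.2 ⟨he, r.le_refl e (hsub e he)⟩
  · exact fun hex =>
      hne (r.le_antisymm x (hsub x hx) e (hsub e he) hxe (Finset.mem_filter.1 hex).2)

structure IsLinPrefix (r : Lposet E L) (p : List E) : Prop where
  nodup : p.Nodup
  subset : ∀ e ∈ p, e ∈ r.events
  pairwise : p.Pairwise fun a b => ¬ r.le b a
  downClosed : ∀ x ∈ r.events, ∀ y ∈ p, r.le x y → x ∈ p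

lemma IsLinWith.isLinPrefix_of_prefix {r : Lposet E L} {es p : List E} {W : List L}
    (h : IsLinWith r es W) (hp : p <+: es) : IsLinPrefix r p := by
  obtain ⟨hnd, hmem, hord, -⟩ := h
  obtain ⟨q, rfl⟩ := hp
  rw [forall_rel_get_imp_le_iff_pairwise, List.pairwise_append] at hord
  refine ⟨hnd.of_append_left, fun e he => (hmem e).1 (List.mem_append_left q he), hord.1,
    fun x hx y hy hxy => ?_⟩
  rcases List.mem_append.1 ((hmem x).2 hx) with hxp | hxq
  · exact hxp
  · exact absurd hxy (hord.2.2 y hy x hxq)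

namespace IsLinPrefix

variable {r : Lposet E L} {p : List E}

lemma isPrefixPom_restrict (h : IsLinPrefix r p) : IsPrefixPom (r.restrict (· ∈ p)) r := by
  refine ⟨id, Set.injOn_id _, fun e he => ((r.mem_restrict_events _ e).1 he).1,
    fun _ _ => rfl, fun x y => ?_⟩
  simp only [Lposet.mem_restrict_events, id]
  constructor
  · rintro ⟨x, ⟨hx, -⟩, y, hy, rfl, rfl, hxy⟩
    exact ⟨hx, hy.1, hxy, y, hy, rfl⟩
  · rintro ⟨hx, -, hxy, y, hy, rfl⟩
    exact ⟨x, ⟨hx, h.downClosed x hx y hy.2 hxy⟩, y, hy, rfl, rfl, hxy⟩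

lemma map_lab_mem_lang_restrict (h : IsLinPrefix r p) :
    p.map r.lab ∈ lang (r.restrict (· ∈ p)) :=
  ⟨p, h.nodup, fun e => by simpa using fun he => h.subset e he,
    (forall_rel_get_imp_le_iff_pairwise _ _).2 h.pairwise, rfl⟩

lemma append_minimal (h : IsLinPrefix r p) {e : E} (he : e ∈ r.events) (hep : e ∉ p)
    (hmin : ∀ x ∈ r.events, x ∉ p → r.le x e → x = e) : IsLinPrefix r (p ++ [e]) where
  nodup := h.nodup.append (List.nodup_singleton e) (List.disjoint_singleton.2 hep)
  subset x hx := by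
    rcases List.mem_append.1 hx with hx | hx
    · exact h.subset x hx
    · exact List.mem_singleton.1 hx ▸ he
  pairwise := List.pairwise_append.2 ⟨h.pairwise, List.pairwise_singleton _ e,
    fun a ha b hb hba => hep (h.downClosed e he a ha (List.mem_singleton.1 hb ▸ hba))⟩
  downClosed x hx y hy hxy := by
    by_cases hxp : x ∈ p
    · exact List.mem_append_left _ hxp
    rcases List.mem_append.1 hy with hy | hy
    · exact absurd (h.downClosed x hx y hy hxy) hxp
    · exact List.mem_append_right _ (List.mem_singleton.2
        (hmin x hx hxp (List.mem_singleton.1 hy ▸ hxy)))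

lemma isLinWith_of_forall_mem (h : IsLinPrefix r p) (hall : ∀ e ∈ r.events, e ∈ p) :
    IsLinWith r p (p.map r.lab) :=
  ⟨h.nodup, fun e => ⟨h.subset e, hall e⟩,
    (forall_rel_get_imp_le_iff_pairwise _ _).2 h.pairwise, rfl⟩

lemma exists_linearization (h : IsLinPrefix r p) :
    ∃ es, p <+: es ∧ IsLinWith r es (es.map r.lab) := by
  classical
  induction hn : (r.events.filter (· ∉ p)).card generalizing p with
  | zero =>
    rw [Finset.card_eq_zero, Finset.filter_eq_empty_iff] at hn
    exact ⟨p, List.prefix_refl p, h.isLinWith_of_forall_mem fun e he => not_not.1 (hn he)⟩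
  | succ n ih =>
    obtain ⟨e, he, hmin⟩ := r.exists_minimal (s := r.events.filter (· ∉ p))
      (Finset.card_pos.1 (hn ▸ n.succ_pos)) fun x hx => (Finset.mem_filter.1 hx).1
    rw [Finset.mem_filter] at he
    have hmin' : ∀ x ∈ r.events, x ∉ p → r.le x e → x = e :=
      fun x hx hxp => hmin x (Finset.mem_filter.2 ⟨hx, hxp⟩)
    have hrest : r.events.filter (· ∉ p ++ [e]) = (r.events.filter (· ∉ p)).erase e := by
      ext x
      simp only [Finset.mem_filter, Finset.mem_erase, List.mem_append, List.mem_singleton]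
      tauto
    obtain ⟨es, hpes, hes⟩ := ih (h.append_minimal he.1 he.2 hmin')
      (by rw [hrest, Finset.card_erase_of_mem (Finset.mem_filter.2 he), hn]; rfl)
    exact ⟨es, (List.prefix_append p [e]).trans hpes, hes⟩

end IsLinPrefix

lemma IsPrefixPom.exists_isLinPrefix {r' : Lposet F L} {r : Lposet E L} {W : List L}
    (h : IsPrefixPom r' r) (hW : W ∈ lang r') : ∃ p, IsLinPrefix r p ∧ W = p.map r.lab := by
  obtain ⟨φ, hinj, hmaps, hlab, hφ⟩ := h
  obtain ⟨es, hnd, hmem, hord, rfl⟩ := hW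
  rw [forall_rel_get_imp_le_iff_pairwise] at hord
  refine ⟨es.map φ,
    ⟨hnd.map_on fun a ha b hb => hinj ((hmem a).1 ha) ((hmem b).1 hb), ?_, ?_, ?_⟩, ?_⟩
  · simp only [List.mem_map]
    rintro _ ⟨a, ha, rfl⟩
    exact hmaps ((hmem a).1 ha)
  · refine List.pairwise_map.2 (hord.imp_of_mem fun {a b} ha hb hab hφab => hab ?_)
    obtain ⟨b', hb', a', ha', hbb', haa', hle⟩ := (hφ (φ b) (φ a)).2
      ⟨hmaps ((hmem b).1 hb), hmaps ((hmem a).1 ha), hφab, a, (hmem a).1 ha, rfl⟩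
    rwa [hinj hb' ((hmem b).1 hb) hbb', hinj ha' ((hmem a).1 ha) haa'] at hle
  · simp only [List.mem_map]
    rintro x hx _ ⟨b, hb, rfl⟩ hxb
    obtain ⟨a, ha, -, -, rfl, -⟩ := (hφ x (φ b)).2
      ⟨hx, hmaps ((hmem b).1 hb), hxb, b, (hmem b).1 hb, rfl⟩
    exact ⟨a, (hmem a).2 ha, rfl⟩
  · rw [List.map_map]
    exact List.map_congr_left fun a ha => (hlab a ((hmem a).1 ha)).symm

end LinPrefix

/-- `W ∈ pref(L(r))` iff `W ∈ L(r')` for some prefix pomset `r'` of `r`. -/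
theorem statement_3 {E Λ : Type} (r : Lposet E Λ) (W : List Λ) :
    W ∈ prefCl (lang r) ↔ ∃ (F : Type) (r' : Lposet F Λ), IsPrefixPom r' r ∧ W ∈ lang r' := by
  constructor
  · rintro ⟨_, ⟨es, hes⟩, hW⟩
    obtain ⟨p, hpes, rfl⟩ := List.prefix_map_iff.1 (hes.2.2.2 ▸ hW)
    have hp : IsLinPrefix r p := hes.isLinPrefix_of_prefix hpes
    exact ⟨E, _, hp.isPrefixPom_restrict, hp.map_lab_mem_lang_restrict⟩
  · rintro ⟨F, r', hr', hW⟩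
    obtain ⟨p, hp, rfl⟩ := hr'.exists_isLinPrefix hW
    obtain ⟨es, hpes, hes⟩ := hp.exists_linearization
    exact ⟨_, ⟨es, hes⟩, hpes.map r.lab⟩

end CPom
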